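/- The total number of type B_n partitions without zero-block equals Σ_{j=0}^n 2^{n−j} S(n,j), where S(n,j) is the Stirling number of the second kind. -/

import Mathlib

/-- The ground set `{±1, …, ±n}` of type `B_n` partitions, as a finset of integers. -/
noncomputable def BGround (n : ℕ) : Finset ℤ := (Finset.Icc (-(n : ℤ)) n).erase 0

/-- `P` is a set partition of the finset `S`: blocks are nonempty subsets of `S`
and every element of `S` lies in a unique block. -/
def IsPartitionOf (P : Finset (Finset ℤ)) (S : Finset ℤ) : Prop :=
  (∀ B ∈ P, B.Nonempty) ∧ (∀ B ∈ P, B ⊆ S) ∧ (∀ x ∈ S, ∃! B, B ∈ P ∧ x ∈ B)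

/-- The negation `-B` of a block `B`. -/
def negBlock (B : Finset ℤ) : Finset ℤ := B.image (fun x => -x)

/-- `P` is a type `B_n` set partition without zero-block: a set partition of
`{±1, …, ±n}` such that the negation of every block is a block and no block is
self-negating. -/
def IsBPartNZ (n : ℕ) (P : Finset (Finset ℤ)) : Prop :=
  IsPartitionOf P (BGround n) ∧ (∀ B ∈ P, negBlock B ∈ P) ∧ ∀ B ∈ P, negBlock B ≠ B

/-- The number of singleton pairs `±i` of `P`, i.e. of `i ∈ [n]` with `{i}` a block. -/
noncomputable def spairs (n : ℕ) (P : Finset (Finset ℤ)) : ℕ :=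
  ((Finset.Icc (1 : ℤ) n).filter (fun i => {i} ∈ P)).card

/-- The cyclic successor of `j` in `{1, …, n}` (so `n` is followed by `1`). -/
def bnext (n : ℕ) (j : ℤ) : ℤ := if j = n then 1 else j + 1

/-- The number of adjacency pairs `±(j, j+1)` of `P`, i.e. of `j ∈ [n]` with `j` and
`j+1` (mod `n`) in a common block. -/
noncomputable def apairs (n : ℕ) (P : Finset (Finset ℤ)) : ℕ :=
  ((Finset.Icc (1 : ℤ) n).filter (fun j => ∃ B ∈ P, j ∈ B ∧ bnext n j ∈ B)).card

/-- Stirling numbers of the second kind. -/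
def stirling2 : ℕ → ℕ → ℕ
  | 0, 0 => 1
  | 0, _ + 1 => 0
  | _ + 1, 0 => 0
  | n + 1, k + 1 => (k + 1) * stirling2 n (k + 1) + stirling2 n k

/-! ### Auxiliary machinery -/

section Aux

lemma mem_BGround {n : ℕ} {x : ℤ} : x ∈ BGround n ↔ x ≠ 0 ∧ x.natAbs ≤ n := by
  simp only [BGround, Finset.mem_erase, Finset.mem_Icc]
  omega

lemma neg_mem_BGround {n : ℕ} {x : ℤ} (h : x ∈ BGround n) : -x ∈ BGround n := by
  rw [mem_BGround] at h ⊢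
  omega

lemma mem_negBlock {B : Finset ℤ} {x : ℤ} : x ∈ negBlock B ↔ -x ∈ B := by
  simp only [negBlock, Finset.mem_image]
  constructor
  · rintro ⟨y, hy, rfl⟩; simpa using hy
  · intro h; exact ⟨-x, h, by ring⟩

/-- The element of minimal absolute value in a finset of integers (choosing the
positive one if both signs occur). -/
def minAbsEl (B : Finset ℤ) : ℤ :=
  if h : B.Nonempty then
    if (((B.image Int.natAbs).min' (h.image _) : ℕ) : ℤ) ∈ B then
      (((B.image Int.natAbs).min' (h.image _) : ℕ) : ℤ)
    else -(((B.image Int.natAbs).min' (h.image _) : ℕ) : ℤ)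
  else 0

lemma minAbsEl_mem {B : Finset ℤ} (h : B.Nonempty) : minAbsEl B ∈ B := by
  rw [minAbsEl, dif_pos h]
  set m := (B.image Int.natAbs).min' (h.image _) with hm
  split_ifs with hmem
  · exact hmem
  · have : m ∈ B.image Int.natAbs := Finset.min'_mem _ _
    obtain ⟨y, hy, hym⟩ := Finset.mem_image.mp this
    have : y = (m : ℤ) ∨ y = -(m : ℤ) := by omega
    rcases this with rfl | rfl
    · exact absurd hy hmem
    · exact hy

lemma minAbsEl_natAbs {B : Finset ℤ} (h : B.Nonempty) :
    (minAbsEl B).natAbs = (B.image Int.natAbs).min' (h.image _) := by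
  rw [minAbsEl, dif_pos h]
  split_ifs <;> simp

lemma minAbsEl_le {B : Finset ℤ} {y : ℤ} (hy : y ∈ B) :
    (minAbsEl B).natAbs ≤ y.natAbs := by
  have h : B.Nonempty := ⟨y, hy⟩
  rw [minAbsEl_natAbs h]
  exact Finset.min'_le _ _ (Finset.mem_image_of_mem _ hy)

lemma minAbsEl_eq {F : Finset ℤ} {c : ℤ} (hc : c ∈ F)
    (hmin : ∀ y ∈ F, c.natAbs ≤ y.natAbs)
    (huniq : ∀ y ∈ F, y.natAbs = c.natAbs → y = c) : minAbsEl F = c := by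
  have hne : F.Nonempty := ⟨c, hc⟩
  have hm : (F.image Int.natAbs).min' (hne.image _) = c.natAbs := by
    refine le_antisymm (Finset.min'_le _ _ (Finset.mem_image_of_mem _ hc)) ?_
    refine Finset.le_min' _ _ _ ?_
    intro b hb
    obtain ⟨y, hy, rfl⟩ := Finset.mem_image.mp hb
    exact hmin y hy
  rw [minAbsEl, dif_pos hne]
  rw [hm]  -- hope this rewrites all occurrences
  split_ifs with hmem
  · exact huniq _ hmem (by omega)
  · rcases Int.natAbs_eq c with h1 | h1
    · exact absurd (h1 ▸ hc) hmem
    · omega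

lemma eq_minAbsEl_of_natAbs {B : Finset ℤ} {y : ℤ} (hns : ∀ z ∈ B, -z ∉ B)
    (hy : y ∈ B) (ha : y.natAbs = (minAbsEl B).natAbs) : y = minAbsEl B := by
  have h : B.Nonempty := ⟨y, hy⟩
  have hmem := minAbsEl_mem h
  have : y = minAbsEl B ∨ y = -(minAbsEl B) := by omega
  rcases this with rfl | rfl
  · rfl
  · exact absurd hy (hns _ hmem)

lemma image_natAbs_negBlock (B : Finset ℤ) :
    (negBlock B).image Int.natAbs = B.image Int.natAbs := by
  rw [negBlock, Finset.image_image]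
  congr 1
  funext x
  simp

lemma minAbsEl_negBlock {B : Finset ℤ} (h : B.Nonempty) (hns : ∀ z ∈ B, -z ∉ B) :
    minAbsEl (negBlock B) = -minAbsEl B := by
  refine minAbsEl_eq ?_ ?_ ?_
  · exact mem_negBlock.mpr (by simpa using minAbsEl_mem h)
  · intro y hy
    have hyB : -y ∈ B := mem_negBlock.mp hy
    have := minAbsEl_le hyB
    omega
  · intro y hy hay
    have hyB : -y ∈ B := mem_negBlock.mp hy
    have : -y = minAbsEl B := by
      refine eq_minAbsEl_of_natAbs hns hyB (by omega)
    omega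

/-- The block of `P` containing `x` (junk if not unique). -/
def blockOf (P : Finset (Finset ℤ)) (x : ℤ) : Finset ℤ :=
  (P.filter (fun B => x ∈ B)).sup id

lemma blockOf_eq {P : Finset (Finset ℤ)} {x : ℤ} {B : Finset ℤ}
    (hu : ∃! C, C ∈ P ∧ x ∈ C) (hB : B ∈ P) (hx : x ∈ B) : blockOf P x = B := by
  obtain ⟨C, hC, huniq⟩ := hu
  obtain rfl : B = C := huniq B ⟨hB, hx⟩
  have hf : P.filter (fun D => x ∈ D) = {B} := by
    ext D
    simp only [Finset.mem_filter, Finset.mem_singleton]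
    constructor
    · rintro ⟨h1, h2⟩; exact huniq D ⟨h1, h2⟩
    · rintro rfl; exact ⟨hC.1, hC.2⟩
  rw [blockOf, hf, Finset.sup_singleton, id]

end Aux

/-! ### The encoding condition -/

/-- Encoding of a type `B_n` partition without zero-block: `g i` is the element of
minimal absolute value in the block containing `i`. -/
def Gcond (n : ℕ) (g : ℕ → ℤ) : Prop :=
  (∀ i, 1 ≤ i → i ≤ n →
    g i ≠ 0 ∧ (g i).natAbs ≤ i ∧ g (g i).natAbs = ((g i).natAbs : ℤ)) ∧
  (∀ i, i = 0 ∨ n < i → g i = 0)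

def gOf (n : ℕ) (P : Finset (Finset ℤ)) : ℕ → ℤ :=
  fun i => if 1 ≤ i ∧ i ≤ n then minAbsEl (blockOf P (i : ℤ)) else 0

section PartToG

variable {n : ℕ} {P : Finset (Finset ℤ)} (hP : IsBPartNZ n P)

lemma cast_mem_BGround {i : ℕ} (h1 : 1 ≤ i) (h2 : i ≤ n) : ((i : ℤ)) ∈ BGround n := by
  rw [mem_BGround]; omega

include hP

lemma block_no_neg {B : Finset ℤ} (hB : B ∈ P) : ∀ z ∈ B, -z ∉ B := by
  intro z hz hnz
  have hzg : z ∈ BGround n := hP.1.2.1 B hB hz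
  have hnegB : negBlock B ∈ P := hP.2.1 B hB
  have hz' : -z ∈ negBlock B := mem_negBlock.mpr (by simpa using hz)
  have hng : -z ∈ BGround n := neg_mem_BGround hzg
  obtain ⟨C, _, huniq⟩ := hP.1.2.2 (-z) hng
  have h1 := huniq _ ⟨hnegB, hz'⟩
  have h2 := huniq _ ⟨hB, hnz⟩
  exact hP.2.2 B hB (h1.trans h2.symm)

lemma blockOf_mem {x : ℤ} (hx : x ∈ BGround n) :
    blockOf P x ∈ P ∧ x ∈ blockOf P x := by
  obtain ⟨C, ⟨hCP, hxC⟩, _⟩ := hP.1.2.2 x hx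
  rw [blockOf_eq (hP.1.2.2 x hx) hCP hxC]
  exact ⟨hCP, hxC⟩

lemma blockOf_nonempty {x : ℤ} (hx : x ∈ BGround n) : (blockOf P x).Nonempty :=
  ⟨x, (blockOf_mem hP hx).2⟩

lemma gOf_cond : Gcond n (gOf n P) := by
  constructor
  · intro i h1 h2
    have hig : ((i : ℤ)) ∈ BGround n := cast_mem_BGround h1 h2
    obtain ⟨hBP, hiB⟩ := blockOf_mem hP hig
    set B := blockOf P (i : ℤ) with hBdef
    have hgi : gOf n P i = minAbsEl B := by rw [gOf, if_pos ⟨h1, h2⟩]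
    have hne : B.Nonempty := ⟨_, hiB⟩
    have hcB : minAbsEl B ∈ B := minAbsEl_mem hne
    have hcg : minAbsEl B ∈ BGround n := hP.1.2.1 B hBP hcB
    have hc0 : minAbsEl B ≠ 0 := (mem_BGround.mp hcg).1
    have hle : (minAbsEl B).natAbs ≤ i := by
      have := minAbsEl_le hiB
      simpa using this
    refine ⟨by rw [hgi]; exact hc0, by rw [hgi]; exact hle, ?_⟩
    rw [hgi]
    set m := (minAbsEl B).natAbs with hmdef
    have hm1 : 1 ≤ m := by omega
    have hmn : m ≤ n := le_trans hle h2
    have hmg : ((m : ℤ)) ∈ BGround n := cast_mem_BGround hm1 hmn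
    rw [gOf, if_pos ⟨hm1, hmn⟩]
    rcases Int.natAbs_eq (minAbsEl B) with hcase | hcase
    · -- minAbsEl B = m
      have hmB : (m : ℤ) ∈ B := by rw [hmdef, ← hcase]; exact hcB
      have hbo : blockOf P (m : ℤ) = B := blockOf_eq (hP.1.2.2 _ hmg) hBP hmB
      rw [hbo, hmdef]; exact hcase
    · -- minAbsEl B = -m
      have hmB : (m : ℤ) ∈ negBlock B := by
        rw [mem_negBlock]
        have : -(m : ℤ) = minAbsEl B := by omega
        rw [this]; exact hcB
      have hnegP : negBlock B ∈ P := hP.2.1 B hBP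
      have : blockOf P (m : ℤ) = negBlock B := blockOf_eq (hP.1.2.2 _ hmg) hnegP hmB
      rw [this, minAbsEl_negBlock hne (block_no_neg hP hBP)]
      omega
  · intro i hi
    rw [gOf, if_neg (by omega)]

end PartToG

/-! ### From encoding functions back to partitions -/

/-- The signed representative function on the ground set. -/
def phiF (g : ℕ → ℤ) : ℤ → ℤ := fun y => if 0 < y then g y.natAbs else -(g y.natAbs)

noncomputable def POf (n : ℕ) (g : ℕ → ℤ) : Finset (Finset ℤ) :=
  (BGround n).image (fun x => (BGround n).filter (fun y => phiF g y = phiF g x))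

section GToPart

variable {n : ℕ} {g : ℕ → ℤ} (hg : Gcond n g)

lemma phiF_neg {y : ℤ} (hy : y ≠ 0) : phiF g (-y) = -phiF g y := by
  simp only [phiF, Int.natAbs_neg]
  split_ifs <;> first | omega | ring

include hg

lemma phiF_spec {x : ℤ} (hx : x ∈ BGround n) :
    phiF g x ≠ 0 ∧ (phiF g x).natAbs = (g x.natAbs).natAbs ∧
      (phiF g x).natAbs ≤ x.natAbs := by
  rw [mem_BGround] at hx
  obtain ⟨hg0, hgle, _⟩ := hg.1 x.natAbs (by omega) hx.2
  rw [phiF]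
  split_ifs <;> constructor <;> simp [Int.natAbs_neg] <;> omega

lemma phiF_mem {x : ℤ} (hx : x ∈ BGround n) : phiF g x ∈ BGround n := by
  obtain ⟨h0, habs, hle⟩ := phiF_spec hg hx
  rw [mem_BGround] at hx ⊢
  exact ⟨h0, by omega⟩

lemma phiF_idem {x : ℤ} (hx : x ∈ BGround n) : phiF g (phiF g x) = phiF g x := by
  rw [mem_BGround] at hx
  obtain ⟨hg0, hgle, hgfix⟩ := hg.1 x.natAbs (by omega) hx.2
  set c := phiF g x with hc
  have hcval : c = g x.natAbs ∨ c = -(g x.natAbs) := by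
    rw [hc, phiF]; split_ifs
    · left; rfl
    · right; rfl
  have hcabs : c.natAbs = (g x.natAbs).natAbs := by rcases hcval with h | h <;> simp [h]
  rw [phiF, hcabs, hgfix]
  rcases hcval with h | h <;> omega

omit hg in
lemma POf_block_eq {x x' : ℤ} (hphi : phiF g x = phiF g x') :
    (BGround n).filter (fun y => phiF g y = phiF g x)
      = (BGround n).filter (fun y => phiF g y = phiF g x') := by
  apply Finset.filter_congr
  intro y _
  simp [hphi]

lemma POf_isBPart : IsBPartNZ n (POf n g) := by
  have hmemP : ∀ x ∈ BGround n,
      (BGround n).filter (fun y => phiF g y = phiF g x) ∈ POf n g := by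
    intro x hx
    exact Finset.mem_image_of_mem _ hx
  have hself : ∀ x ∈ BGround n,
      x ∈ (BGround n).filter (fun y => phiF g y = phiF g x) := by
    intro x hx
    exact Finset.mem_filter.mpr ⟨hx, rfl⟩
  refine ⟨⟨?_, ?_, ?_⟩, ?_, ?_⟩
  · rintro B hB
    obtain ⟨x, hx, rfl⟩ := Finset.mem_image.mp hB
    exact ⟨x, hself x hx⟩
  · rintro B hB
    obtain ⟨x, hx, rfl⟩ := Finset.mem_image.mp hB
    exact Finset.filter_subset _ _
  · intro x hx
    refine ⟨(BGround n).filter (fun y => phiF g y = phiF g x),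
      ⟨hmemP x hx, hself x hx⟩, ?_⟩
    rintro C ⟨hC, hxC⟩
    obtain ⟨x', hx', rfl⟩ := Finset.mem_image.mp hC
    have := (Finset.mem_filter.mp hxC).2
    exact POf_block_eq this.symm
  · rintro B hB
    obtain ⟨x, hx, rfl⟩ := Finset.mem_image.mp hB
    have hnx : -x ∈ BGround n := neg_mem_BGround hx
    have hkey : negBlock ((BGround n).filter (fun y => phiF g y = phiF g x))
        = (BGround n).filter (fun y => phiF g y = phiF g (-x)) := by
      ext z
      rw [mem_negBlock, Finset.mem_filter, Finset.mem_filter]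
      constructor
      · rintro ⟨hz1, hz2⟩
        have hzg : z ∈ BGround n := by
          have := neg_mem_BGround hz1; simpa using this
        have hz0 : z ≠ 0 := (mem_BGround.mp hzg).1
        refine ⟨hzg, ?_⟩
        have := phiF_neg (g := g) hz0
        rw [phiF_neg (g := g) (mem_BGround.mp hx).1]
        have h2 : phiF g (-z) = phiF g x := hz2
        calc phiF g z = -phiF g (-z) := by rw [phiF_neg hz0]; ring
        _ = -phiF g x := by rw [h2]
      · rintro ⟨hz1, hz2⟩
        have hz0 : z ≠ 0 := (mem_BGround.mp hz1).1
        refine ⟨neg_mem_BGround hz1, ?_⟩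
        show phiF g (-z) = phiF g x
        rw [phiF_neg hz0, hz2, phiF_neg (mem_BGround.mp hx).1]
        ring
    rw [hkey]
    exact hmemP _ hnx
  · rintro B hB hcontra
    obtain ⟨x, hx, rfl⟩ := Finset.mem_image.mp hB
    have hxB := hself x hx
    rw [← hcontra, mem_negBlock, Finset.mem_filter] at hxB
    have h1 : phiF g (-x) = phiF g x := hxB.2
    have hx0 : x ≠ 0 := (mem_BGround.mp hx).1
    rw [phiF_neg hx0] at h1
    have : phiF g x = 0 := by omega
    exact (mem_BGround.mp (phiF_mem hg hx)).1 this

lemma gOf_POf : gOf n (POf n g) = g := by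
  funext i
  by_cases hi : 1 ≤ i ∧ i ≤ n
  · have hig : ((i : ℤ)) ∈ BGround n := cast_mem_BGround hi.1 hi.2
    rw [gOf, if_pos hi]
    have hbp := POf_isBPart hg
    have hmem : ((i : ℤ)) ∈ (BGround n).filter (fun y => phiF g y = phiF g (i : ℤ)) :=
      Finset.mem_filter.mpr ⟨hig, rfl⟩
    have hinP : (BGround n).filter (fun y => phiF g y = phiF g (i : ℤ)) ∈ POf n g :=
      Finset.mem_image_of_mem _ hig
    rw [blockOf_eq (hbp.1.2.2 _ hig) hinP hmem]
    set F := (BGround n).filter (fun y => phiF g y = phiF g (i : ℤ)) with hF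
    set c := phiF g (i : ℤ) with hc
    have hphii : c = g i := by
      rw [hc]
      simp only [phiF]
      rw [if_pos (by omega : (0:ℤ) < (i : ℤ))]
      simp
    obtain ⟨hg0, hgle, hgfix⟩ := hg.1 i hi.1 hi.2
    have hcF : c ∈ F := by
      rw [hF, Finset.mem_filter]
      exact ⟨phiF_mem hg hig, phiF_idem hg hig⟩
    have habs : ∀ y ∈ F, c.natAbs ≤ y.natAbs := by
      intro y hy
      rw [hF, Finset.mem_filter] at hy
      obtain ⟨hyg, hyphi⟩ := hy
      have h1 := (phiF_spec hg hyg).2.1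
      have h2 := (phiF_spec hg hyg).2.2
      rw [hyphi] at h1 h2
      omega
    have hcabs : c.natAbs = (g i).natAbs := by rw [hphii]
    have hgm : g (g i).natAbs = ((g i).natAbs : ℤ) := hgfix
    have huniq : ∀ y ∈ F, y.natAbs = c.natAbs → y = c := by
      intro y hy hya
      rw [hF, Finset.mem_filter] at hy
      obtain ⟨hyg, hyphi⟩ := hy
      have hy0 : y ≠ 0 := (mem_BGround.mp hyg).1
      have : phiF g y = c := hyphi
      simp only [phiF] at this
      have hyabs : y.natAbs = (g i).natAbs := by omega
      rw [hyabs, hgm] at this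
      split_ifs at this <;> omega
    rw [minAbsEl_eq hcF habs huniq]
    exact hphii
  · rw [gOf, if_neg hi]
    exact (hg.2 i (by omega)).symm

end GToPart

section RoundTrip2

variable {n : ℕ} {P : Finset (Finset ℤ)} (hP : IsBPartNZ n P)

include hP

lemma phiF_gOf {y : ℤ} (hy : y ∈ BGround n) :
    phiF (gOf n P) y = minAbsEl (blockOf P y) := by
  rw [mem_BGround] at hy
  have hnat : 1 ≤ y.natAbs ∧ y.natAbs ≤ n := by omega
  have hgval : gOf n P y.natAbs = minAbsEl (blockOf P (y.natAbs : ℤ)) := by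
    rw [gOf, if_pos hnat]
  rcases lt_trichotomy y 0 with hneg | h0 | hpos
  · rw [phiF, if_neg (by omega), hgval]
    have hyy : ((y.natAbs : ℤ)) = -y := by omega
    have hyg : y ∈ BGround n := mem_BGround.mpr ⟨by omega, by omega⟩
    obtain ⟨hBP, hyB⟩ := blockOf_mem hP hyg
    set B := blockOf P y with hB
    have hnyg : -y ∈ BGround n := neg_mem_BGround hyg
    have hnyB : -y ∈ negBlock B := mem_negBlock.mpr (by simpa using hyB)
    have hnegP : negBlock B ∈ P := hP.2.1 B hBP
    have : blockOf P (-y) = negBlock B := blockOf_eq (hP.1.2.2 _ hnyg) hnegP hnyB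
    rw [hyy, this, minAbsEl_negBlock ⟨y, hyB⟩ (block_no_neg hP hBP)]
    ring
  · omega
  · rw [phiF, if_pos hpos, hgval]
    congr 2
    omega

lemma POf_gOf : POf n (gOf n P) = P := by
  have hblockeq : ∀ x ∈ BGround n,
      (BGround n).filter (fun y => phiF (gOf n P) y = phiF (gOf n P) x) = blockOf P x := by
    intro x hx
    ext y
    rw [Finset.mem_filter]
    constructor
    · rintro ⟨hyg, hyphi⟩
      rw [phiF_gOf hP hyg, phiF_gOf hP hx] at hyphi
      obtain ⟨hBy, hyBy⟩ := blockOf_mem hP hyg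
      obtain ⟨hBx, hxBx⟩ := blockOf_mem hP hx
      have hcy : minAbsEl (blockOf P y) ∈ blockOf P y := minAbsEl_mem ⟨y, hyBy⟩
      have hcx : minAbsEl (blockOf P x) ∈ blockOf P x := minAbsEl_mem ⟨x, hxBx⟩
      rw [hyphi] at hcy
      have hcg : minAbsEl (blockOf P x) ∈ BGround n := hP.1.2.1 _ hBx hcx
      obtain ⟨C, _, huniq⟩ := hP.1.2.2 _ hcg
      have h1 := huniq _ ⟨hBy, hcy⟩
      have h2 := huniq _ ⟨hBx, hcx⟩
      rw [← h1.trans h2.symm]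
      exact hyBy
    · intro hyB
      obtain ⟨hBx, hxBx⟩ := blockOf_mem hP hx
      have hyg : y ∈ BGround n := hP.1.2.1 _ hBx hyB
      refine ⟨hyg, ?_⟩
      rw [phiF_gOf hP hyg, phiF_gOf hP hx]
      have : blockOf P y = blockOf P x := blockOf_eq (hP.1.2.2 _ hyg) hBx hyB
      rw [this]
  rw [POf]
  ext B
  rw [Finset.mem_image]
  constructor
  · rintro ⟨x, hx, rfl⟩
    rw [hblockeq x hx]
    exact (blockOf_mem hP hx).1
  · intro hB
    obtain ⟨x, hxB⟩ := hP.1.1 B hB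
    have hxg : x ∈ BGround n := hP.1.2.1 B hB hxB
    refine ⟨x, hxg, ?_⟩
    rw [hblockeq x hxg]
    exact blockOf_eq (hP.1.2.2 _ hxg) hB hxB

end RoundTrip2

/-- The key bijection. -/
noncomputable def equivG (n : ℕ) : {P : Finset (Finset ℤ) // IsBPartNZ n P} ≃ {g : ℕ → ℤ // Gcond n g} where
  toFun := fun x => ⟨gOf n x.1, gOf_cond x.2⟩
  invFun := fun x => ⟨POf n x.1, POf_isBPart x.2⟩
  left_inv := fun x => Subtype.ext (POf_gOf x.2)
  right_inv := fun x => Subtype.ext (gOf_POf x.2)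

/-! ### Counting the encoding functions -/

def fixSet (n : ℕ) (g : ℕ → ℤ) : Finset ℕ :=
  (Finset.Icc 1 n).filter (fun m => g m = (m : ℤ))

abbrev Tset (n j : ℕ) : Type := {g : ℕ → ℤ // Gcond n g ∧ (fixSet n g).card = j}

instance instFiniteG (n : ℕ) : Finite {g : ℕ → ℤ // Gcond n g} := by
  have hmem : ∀ (x : {g : ℕ → ℤ // Gcond n g}) (i : Fin (n+1)),
      x.1 i ∈ Finset.Icc (-(n:ℤ)) (n:ℤ) := by
    intro x i
    have hlt := i.isLt
    rw [Finset.mem_Icc]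
    by_cases h : 1 ≤ (i:ℕ) ∧ (i:ℕ) ≤ n
    · have := (x.2.1 i h.1 h.2).2.1
      omega
    · have : x.1 i = 0 := x.2.2 i (by omega)
      omega
  refine Finite.of_injective
    (fun x => fun i : Fin (n+1) => (⟨x.1 i, hmem x i⟩ : (Finset.Icc (-(n:ℤ)) (n:ℤ)))) ?_
  intro a b hab
  apply Subtype.ext; funext i
  by_cases h : i ≤ n
  · have := congrFun hab ⟨i, by omega⟩
    simpa [Subtype.ext_iff] using this
  · rw [a.2.2 i (by omega), b.2.2 i (by omega)]

instance instFiniteT (n j : ℕ) : Finite (Tset n j) :=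
  Finite.of_injective (fun x => (⟨x.1, x.2.1⟩ : {g : ℕ → ℤ // Gcond n g}))
    (by
      intro a b h
      have h2 : a.1 = b.1 := congrArg (Subtype.val : {g : ℕ → ℤ // Gcond n g} → (ℕ → ℤ)) h
      exact Subtype.ext h2)

lemma card_G_eq_sum (n : ℕ) :
    Nat.card {g : ℕ → ℤ // Gcond n g} = ∑ j ∈ Finset.range (n+1), Nat.card (Tset n j) := by
  classical
  letI : Fintype {g : ℕ → ℤ // Gcond n g} := Fintype.ofFinite _
  rw [Nat.card_eq_fintype_card, ← Finset.card_univ]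
  have hbound : ∀ x : {g : ℕ → ℤ // Gcond n g}, x ∈ Finset.univ →
      (fixSet n x.1).card ∈ Finset.range (n+1) := by
    intro x _
    rw [Finset.mem_range]
    have h1 : (fixSet n x.1).card ≤ (Finset.Icc 1 n).card := Finset.card_filter_le _ _
    rw [Nat.card_Icc] at h1
    omega
  rw [Finset.card_eq_sum_card_fiberwise hbound]
  refine Finset.sum_congr rfl ?_
  intro j _
  calc (Finset.univ.filter fun x : {g : ℕ → ℤ // Gcond n g} => (fixSet n x.1).card = j).card
      = Fintype.card {x : {g : ℕ → ℤ // Gcond n g} // (fixSet n x.1).card = j} :=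
        (Fintype.card_subtype _).symm
    _ = Nat.card {x : {g : ℕ → ℤ // Gcond n g} // (fixSet n x.1).card = j} :=
        (Nat.card_eq_fintype_card).symm
    _ = Nat.card (Tset n j) := Nat.card_congr
        { toFun := fun x => ⟨x.1.1, x.1.2, x.2⟩
          invFun := fun x => ⟨⟨x.1, x.2.1⟩, x.2.2⟩
          left_inv := fun x => rfl
          right_inv := fun x => rfl }

/-! ### The recurrence -/

lemma mem_fixSet {n m : ℕ} {g : ℕ → ℤ} :
    m ∈ fixSet n g ↔ (1 ≤ m ∧ m ≤ n) ∧ g m = (m : ℤ) := by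
  simp only [fixSet, Finset.mem_filter, Finset.mem_Icc]

def restr (n : ℕ) (g : ℕ → ℤ) : ℕ → ℤ := fun i => if i ≤ n then g i else 0

def extF (n : ℕ) (g : ℕ → ℤ) (c : ℤ) : ℕ → ℤ := fun i => if i = n + 1 then c else g i

lemma restr_apply_le {n i : ℕ} {g : ℕ → ℤ} (h : i ≤ n) : restr n g i = g i := if_pos h

lemma restr_apply_gt {n i : ℕ} {g : ℕ → ℤ} (h : ¬i ≤ n) : restr n g i = 0 := if_neg h

lemma extF_apply_ne {n i : ℕ} {g : ℕ → ℤ} {c : ℤ} (h : i ≠ n + 1) : extF n g c i = g i :=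
  if_neg h

lemma extF_apply {n : ℕ} {g : ℕ → ℤ} {c : ℤ} : extF n g c (n + 1) = c := if_pos rfl

def sgn (b : Bool) : ℤ := if b then 1 else -1

lemma sgn_mul_natAbs (b : Bool) (m : ℕ) : (sgn b * (m : ℤ)).natAbs = m := by
  cases b <;> simp [sgn]

lemma sgn_decide_mul {a : ℤ} (ha : a ≠ 0) : sgn (decide (0 < a)) * (a.natAbs : ℤ) = a := by
  by_cases h : 0 < a
  · rw [decide_eq_true h]
    show 1 * (a.natAbs : ℤ) = a
    omega
  · rw [decide_eq_false h]
    show -1 * (a.natAbs : ℤ) = a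
    omega

lemma decide_sgn {b : Bool} {m : ℕ} (hm : 1 ≤ m) : decide (0 < sgn b * (m : ℤ)) = b := by
  cases b
  · apply decide_eq_false
    have h : sgn false = -1 := rfl
    rw [h]
    omega
  · apply decide_eq_true
    have h : sgn true = 1 := rfl
    rw [h]
    omega

section Recurrence

variable {n j : ℕ}

lemma restr_cond {g : ℕ → ℤ} (hg : Gcond (n + 1) g) : Gcond n (restr n g) := by
  constructor
  · intro i h1 h2
    obtain ⟨a, b, c⟩ := hg.1 i h1 (by omega)
    rw [restr_apply_le h2, restr_apply_le (show (g i).natAbs ≤ n by omega)]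
    exact ⟨a, b, c⟩
  · intro i hi
    by_cases h : i ≤ n
    · rw [restr_apply_le h]
      exact hg.2 i (by omega)
    · exact restr_apply_gt h

lemma restr_fixSet {g : ℕ → ℤ} :
    fixSet n (restr n g) = (fixSet (n + 1) g).erase (n + 1) := by
  ext m
  simp only [mem_fixSet, Finset.mem_erase]
  constructor
  · rintro ⟨⟨h1, h2⟩, h3⟩
    rw [restr_apply_le h2] at h3
    exact ⟨by omega, ⟨h1, by omega⟩, h3⟩
  · rintro ⟨hne, ⟨h1, h2⟩, h3⟩
    have hm : m ≤ n := by omega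
    refine ⟨⟨h1, hm⟩, ?_⟩
    rw [restr_apply_le hm]
    exact h3

lemma extF_cond {g : ℕ → ℤ} {c : ℤ} (hg : Gcond n g) (hc0 : c ≠ 0)
    (hle : c.natAbs ≤ n + 1) (hfix : extF n g c c.natAbs = (c.natAbs : ℤ)) :
    Gcond (n + 1) (extF n g c) := by
  constructor
  · intro i h1 h2
    by_cases hi : i = n + 1
    · subst hi
      rw [extF_apply]
      exact ⟨hc0, hle, hfix⟩
    · have h2' : i ≤ n := by omega
      obtain ⟨a, b, c'⟩ := hg.1 i h1 h2'
      rw [extF_apply_ne hi, extF_apply_ne (show (g i).natAbs ≠ n + 1 by omega)]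
      exact ⟨a, b, c'⟩
  · intro i hi
    rw [extF_apply_ne (show i ≠ n + 1 by omega)]
    exact hg.2 i (by omega)

lemma extF_fixSet {g : ℕ → ℤ} {c : ℤ} (hcne : c ≠ ((n + 1 : ℕ) : ℤ)) :
    fixSet (n + 1) (extF n g c) = fixSet n g := by
  ext m
  simp only [mem_fixSet]
  constructor
  · rintro ⟨⟨h1, h2⟩, h3⟩
    by_cases hm : m = n + 1
    · subst hm
      rw [extF_apply] at h3
      exact absurd h3 hcne
    · rw [extF_apply_ne hm] at h3
      exact ⟨⟨h1, by omega⟩, h3⟩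
  · rintro ⟨⟨h1, h2⟩, h3⟩
    have hm : m ≠ n + 1 := by omega
    rw [extF_apply_ne hm]
    exact ⟨⟨h1, by omega⟩, h3⟩

lemma extF_fixSet_top {g : ℕ → ℤ} :
    fixSet (n + 1) (extF n g ((n + 1 : ℕ) : ℤ)) = insert (n + 1) (fixSet n g) := by
  ext m
  simp only [mem_fixSet, Finset.mem_insert]
  constructor
  · rintro ⟨⟨h1, h2⟩, h3⟩
    by_cases hm : m = n + 1
    · exact Or.inl hm
    · rw [extF_apply_ne hm] at h3
      exact Or.inr ⟨⟨h1, by omega⟩, h3⟩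
  · rintro (rfl | ⟨⟨h1, h2⟩, h3⟩)
    · exact ⟨⟨by omega, le_refl _⟩, extF_apply⟩
    · have hm : m ≠ n + 1 := by omega
      rw [extF_apply_ne hm]
      exact ⟨⟨h1, by omega⟩, h3⟩

lemma not_mem_fixSet_succ {g : ℕ → ℤ} : n + 1 ∉ fixSet n g := by
  rw [mem_fixSet]; omega

abbrev TA (n j : ℕ) : Type := {x : Tset (n + 1) (j + 1) // x.1 (n + 1) = ((n + 1 : ℕ) : ℤ)}

abbrev TB (n j : ℕ) : Type := {x : Tset (n + 1) (j + 1) // ¬x.1 (n + 1) = ((n + 1 : ℕ) : ℤ)}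

def equivA : TA n j ≃ Tset n j where
  toFun x := ⟨restr n x.1.1, restr_cond x.1.2.1, by
    have hmem : n + 1 ∈ fixSet (n + 1) x.1.1 :=
      mem_fixSet.mpr ⟨⟨by omega, le_refl _⟩, x.2⟩
    rw [restr_fixSet, Finset.card_erase_of_mem hmem, x.1.2.2]
    omega⟩
  invFun g := ⟨⟨extF n g.1 ((n + 1 : ℕ) : ℤ),
    extF_cond g.2.1 (by exact_mod_cast Nat.succ_ne_zero n) (by omega)
      (by simp only [Int.natAbs_natCast]; exact extF_apply),
    by rw [extF_fixSet_top, Finset.card_insert_of_notMem not_mem_fixSet_succ, g.2.2]⟩,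
    extF_apply⟩
  left_inv x := by
    apply Subtype.ext
    apply Subtype.ext
    funext i
    show extF n (restr n x.1.1) ((n + 1 : ℕ) : ℤ) i = x.1.1 i
    rcases lt_trichotomy i (n + 1) with h | h | h
    · rw [extF_apply_ne (show i ≠ n + 1 by omega), restr_apply_le (show i ≤ n by omega)]
    · subst h
      rw [extF_apply]
      exact x.2.symm
    · rw [extF_apply_ne (show i ≠ n + 1 by omega), restr_apply_gt (show ¬i ≤ n by omega)]
      exact (x.1.2.1.2 i (by omega)).symm
  right_inv g := by
    apply Subtype.ext
    funext i
    show restr n (extF n g.1 ((n + 1 : ℕ) : ℤ)) i = g.1 i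
    by_cases h : i ≤ n
    · rw [restr_apply_le h, extF_apply_ne (show i ≠ n + 1 by omega)]
    · rw [restr_apply_gt h]
      exact (g.2.1.2 i (by omega)).symm

lemma TB_natAbs_le (x : TB n j) : 1 ≤ (x.1.1 (n + 1)).natAbs ∧ (x.1.1 (n + 1)).natAbs ≤ n := by
  obtain ⟨h0, hle, hfx⟩ := x.1.2.1.1 (n + 1) (by omega) (le_refl _)
  constructor
  · omega
  · by_contra hcon
    have he : (x.1.1 (n + 1)).natAbs = n + 1 := by omega
    rw [he] at hfx
    exact x.2 hfx

lemma TB_cardR (x : TB n j) : (fixSet n (restr n x.1.1)).card = j + 1 := by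
  rw [restr_fixSet, Finset.erase_eq_of_notMem, x.1.2.2]
  rw [mem_fixSet]
  rintro ⟨-, h⟩
  exact x.2 h

lemma TB_memR (x : TB n j) : (x.1.1 (n + 1)).natAbs ∈ fixSet n (restr n x.1.1) := by
  obtain ⟨h0, hle, hfx⟩ := x.1.2.1.1 (n + 1) (by omega) (le_refl _)
  have hb := TB_natAbs_le x
  rw [mem_fixSet]
  refine ⟨⟨hb.1, hb.2⟩, ?_⟩
  rw [restr_apply_le hb.2]
  exact hfx

def toB (x : TB n j) : Tset n (j + 1) × Bool × Fin (j + 1) :=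
  (⟨restr n x.1.1, restr_cond x.1.2.1, TB_cardR x⟩,
   decide (0 < x.1.1 (n + 1)),
   (Finset.orderIsoOfFin (fixSet n (restr n x.1.1)) (TB_cardR x)).symm
     ⟨(x.1.1 (n + 1)).natAbs, TB_memR x⟩)

lemma invB_mem (g : Tset n (j + 1)) (k : Fin (j + 1)) :
    ((Finset.orderIsoOfFin (fixSet n g.1) g.2.2 k : ℕ)) ∈ fixSet n g.1 :=
  (Finset.orderIsoOfFin (fixSet n g.1) g.2.2 k).2

lemma invB_cond (g : Tset n (j + 1)) (b : Bool) (k : Fin (j + 1)) :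
    Gcond (n + 1) (extF n g.1
      (sgn b * ((Finset.orderIsoOfFin (fixSet n g.1) g.2.2 k : ℕ) : ℤ))) := by
  set m := ((Finset.orderIsoOfFin (fixSet n g.1) g.2.2 k : ℕ)) with hm
  have hmem := invB_mem g k
  rw [← hm, mem_fixSet] at hmem
  refine extF_cond g.2.1 ?_ ?_ ?_
  · intro hcon
    have h1 := sgn_mul_natAbs b m
    rw [hcon] at h1
    simp at h1
    omega
  · rw [sgn_mul_natAbs]; omega
  · rw [sgn_mul_natAbs, extF_apply_ne (show m ≠ n + 1 by omega)]
    exact hmem.2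

lemma invB_ne (g : Tset n (j + 1)) (b : Bool) (k : Fin (j + 1)) :
    sgn b * ((Finset.orderIsoOfFin (fixSet n g.1) g.2.2 k : ℕ) : ℤ) ≠ ((n + 1 : ℕ) : ℤ) := by
  set m := ((Finset.orderIsoOfFin (fixSet n g.1) g.2.2 k : ℕ)) with hm
  have hmem := invB_mem g k
  rw [← hm, mem_fixSet] at hmem
  intro hcon
  have h1 := sgn_mul_natAbs b m
  rw [hcon] at h1
  simp at h1
  omega

def invB (y : Tset n (j + 1) × Bool × Fin (j + 1)) : TB n j :=
  ⟨⟨extF n y.1.1 (sgn y.2.1 * ((Finset.orderIsoOfFin (fixSet n y.1.1) y.1.2.2 y.2.2 : ℕ) : ℤ)),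
    invB_cond y.1 y.2.1 y.2.2,
    by
      rw [extF_fixSet (invB_ne y.1 y.2.1 y.2.2)]
      exact y.1.2.2⟩,
    by
      intro hcon
      have hcon' : extF n y.1.1
          (sgn y.2.1 * ((Finset.orderIsoOfFin (fixSet n y.1.1) y.1.2.2 y.2.2 : ℕ) : ℤ)) (n + 1)
          = ((n + 1 : ℕ) : ℤ) := hcon
      rw [extF_apply] at hcon'
      exact invB_ne y.1 y.2.1 y.2.2 hcon'⟩

lemma orderIso_symm_congr {s t : Finset ℕ} {p : ℕ} (hst : s = t) (hs : s.card = p)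
    (ht : t.card = p) {x : ℕ} (hx : x ∈ s) (hx' : x ∈ t) :
    (Finset.orderIsoOfFin s hs).symm ⟨x, hx⟩ = (Finset.orderIsoOfFin t ht).symm ⟨x, hx'⟩ := by
  subst hst; rfl

def equivB : TB n j ≃ Tset n (j + 1) × Bool × Fin (j + 1) where
  toFun := toB
  invFun := invB
  left_inv x := by
    have h0 : x.1.1 (n + 1) ≠ 0 := (x.1.2.1.1 (n + 1) (by omega) (le_refl _)).1
    apply Subtype.ext
    apply Subtype.ext
    funext i
    show extF n (restr n x.1.1) _ i = x.1.1 i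
    dsimp only [toB]
    rcases lt_trichotomy i (n + 1) with h | h | h
    · rw [extF_apply_ne (show i ≠ n + 1 by omega), restr_apply_le (show i ≤ n by omega)]
    · subst h
      rw [extF_apply]
      show sgn (decide (0 < x.1.1 (n + 1))) * (((Finset.orderIsoOfFin (fixSet n (restr n x.1.1)) (TB_cardR x)) ((Finset.orderIsoOfFin (fixSet n (restr n x.1.1)) (TB_cardR x)).symm ⟨(x.1.1 (n + 1)).natAbs, TB_memR x⟩) : ℕ) : ℤ) = x.1.1 (n + 1)
      rw [OrderIso.apply_symm_apply]
      exact sgn_decide_mul h0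
    · rw [extF_apply_ne (show i ≠ n + 1 by omega), restr_apply_gt (show ¬i ≤ n by omega)]
      exact (x.1.2.1.2 i (by omega)).symm
  right_inv y := by
    obtain ⟨g, b, k⟩ := y
    set m := ((Finset.orderIsoOfFin (fixSet n g.1) g.2.2 k : ℕ)) with hmdef
    have hmem := invB_mem g k
    rw [← hmdef, mem_fixSet] at hmem
    have hval : (invB (g, b, k)).1.1 (n + 1) = sgn b * (m : ℤ) := extF_apply
    have hrestr : restr n (invB (g, b, k)).1.1 = g.1 := by
      funext i
      by_cases h : i ≤ n
      · rw [restr_apply_le h]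
        exact extF_apply_ne (by omega)
      · rw [restr_apply_gt h]
        exact (g.2.1.2 i (by omega)).symm
    have c1 : (toB (invB (g, b, k))).1 = g := Subtype.ext hrestr
    have c2 : (toB (invB (g, b, k))).2.1 = b := by
      show decide (0 < (invB (g, b, k)).1.1 (n + 1)) = b
      rw [hval]
      exact decide_sgn hmem.1.1
    have c3 : (toB (invB (g, b, k))).2.2 = k := by
      show (Finset.orderIsoOfFin (fixSet n (restr n (invB (g, b, k)).1.1))
          (TB_cardR _)).symm ⟨((invB (g, b, k)).1.1 (n + 1)).natAbs, TB_memR _⟩ = k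
      have habs : ((invB (g, b, k)).1.1 (n + 1)).natAbs = m := by
        rw [hval, sgn_mul_natAbs]
      have hseq : fixSet n (restr n (invB (g, b, k)).1.1) = fixSet n g.1 := by
        rw [hrestr]
      have hmm2 : ((invB (g, b, k)).1.1 (n + 1)).natAbs ∈ fixSet n g.1 := by
        rw [habs]
        exact invB_mem g k
      rw [orderIso_symm_congr hseq (TB_cardR _) g.2.2 (TB_memR _) hmm2]
      have he : (⟨((invB (g, b, k)).1.1 (n + 1)).natAbs, hmm2⟩ : {a // a ∈ fixSet n g.1})
          = Finset.orderIsoOfFin (fixSet n g.1) g.2.2 k := by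
        apply Subtype.ext
        show ((invB (g, b, k)).1.1 (n + 1)).natAbs
            = ((Finset.orderIsoOfFin (fixSet n g.1) g.2.2 k : ℕ))
        rw [habs]
      rw [he, OrderIso.symm_apply_apply]
    calc toB (invB (g, b, k))
        = ((toB (invB (g, b, k))).1, (toB (invB (g, b, k))).2.1, (toB (invB (g, b, k))).2.2) := rfl
      _ = (g, b, k) := by rw [c1, c2, c3]

end Recurrence

instance instFiniteTA (n j : ℕ) : Finite (TA n j) := Subtype.finite
instance instFiniteTB (n j : ℕ) : Finite (TB n j) := Subtype.finite

lemma card_T_rec (n j : ℕ) :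
    Nat.card (Tset (n + 1) (j + 1))
      = 2 * (j + 1) * Nat.card (Tset n (j + 1)) + Nat.card (Tset n j) := by
  calc Nat.card (Tset (n + 1) (j + 1))
      = Nat.card (TA n j ⊕ TB n j) :=
        (Nat.card_congr (Equiv.sumCompl
          (fun x : Tset (n + 1) (j + 1) => x.1 (n + 1) = ((n + 1 : ℕ) : ℤ)))).symm
    _ = Nat.card (TA n j) + Nat.card (TB n j) := Nat.card_sum
    _ = Nat.card (Tset n j) + Nat.card (Tset n (j + 1) × Bool × Fin (j + 1)) := by
        rw [Nat.card_congr (equivA (n := n) (j := j)), Nat.card_congr (equivB (n := n) (j := j))]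
    _ = Nat.card (Tset n j) + Nat.card (Tset n (j + 1)) * (2 * (j + 1)) := by
        rw [Nat.card_prod, Nat.card_prod]
        have hb : Nat.card Bool = 2 := by simp [Nat.card_eq_fintype_card]
        have hf : Nat.card (Fin (j + 1)) = j + 1 := by simp [Nat.card_eq_fintype_card]
        rw [hb, hf]
    _ = 2 * (j + 1) * Nat.card (Tset n (j + 1)) + Nat.card (Tset n j) := by ring

/-! ### Base cases and the closed formula -/

lemma card_T_zero_zero : Nat.card (Tset 0 0) = 1 := by
  have hfix0 : fixSet 0 (fun _ => (0 : ℤ)) = ∅ := by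
    ext m
    simp only [mem_fixSet, Finset.notMem_empty, iff_false]
    rintro ⟨⟨h1, h2⟩, -⟩
    omega
  have hd : Tset 0 0 := ⟨fun _ => 0, ⟨fun i h1 h2 => by omega, fun i _ => rfl⟩, by
    rw [hfix0]; rfl⟩
  haveI : Nonempty (Tset 0 0) := ⟨hd⟩
  haveI : Subsingleton (Tset 0 0) := ⟨by
    intro a b
    apply Subtype.ext
    funext i
    rw [a.2.1.2 i (by omega), b.2.1.2 i (by omega)]⟩
  exact Nat.card_unique

lemma card_T_zero_succ (j : ℕ) : Nat.card (Tset 0 (j + 1)) = 0 := by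
  haveI : IsEmpty (Tset 0 (j + 1)) := ⟨by
    intro x
    have h := x.2.2
    have hle : (fixSet 0 x.1).card ≤ (Finset.Icc 1 0).card := Finset.card_filter_le _ _
    rw [Nat.card_Icc] at hle
    omega⟩
  exact Nat.card_of_isEmpty

lemma card_T_succ_zero (n : ℕ) : Nat.card (Tset (n + 1) 0) = 0 := by
  haveI : IsEmpty (Tset (n + 1) 0) := ⟨by
    intro x
    obtain ⟨h0, hle, hfx⟩ := x.2.1.1 1 (le_refl _) (by omega)
    have ha : (x.1 1).natAbs = 1 := by omega
    rw [ha] at hfx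
    have h1 : (1 : ℕ) ∈ fixSet (n + 1) x.1 :=
      mem_fixSet.mpr ⟨⟨le_refl _, by omega⟩, by exact_mod_cast hfx⟩
    have := Finset.card_pos.mpr ⟨1, h1⟩
    have h2 := x.2.2
    omega⟩
  exact Nat.card_of_isEmpty

lemma stirling2_eq_zero {n k : ℕ} (h : n < k) : stirling2 n k = 0 := by
  induction n generalizing k with
  | zero =>
    obtain ⟨m, rfl⟩ : ∃ m, k = m + 1 := ⟨k - 1, by omega⟩
    rfl
  | succ n ih =>
    obtain ⟨m, rfl⟩ : ∃ m, k = m + 1 := ⟨k - 1, by omega⟩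
    have hs : stirling2 (n + 1) (m + 1) = (m + 1) * stirling2 n (m + 1) + stirling2 n m := by
      simp only [stirling2]
    rw [hs, ih (by omega), ih (by omega)]
    ring

lemma card_T_formula (n : ℕ) : ∀ j, Nat.card (Tset n j) = 2 ^ (n - j) * stirling2 n j := by
  induction n with
  | zero =>
    intro j
    cases j with
    | zero =>
      rw [card_T_zero_zero]
      rfl
    | succ j =>
      rw [card_T_zero_succ, stirling2_eq_zero (by omega)]
      ring
  | succ n ih =>
    intro j
    cases j with
    | zero =>
      rw [card_T_succ_zero]
      have h0 : stirling2 (n + 1) 0 = 0 := rfl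
      rw [h0]
      ring
    | succ j =>
      rw [card_T_rec, ih j, ih (j + 1)]
      have hs : stirling2 (n + 1) (j + 1) = (j + 1) * stirling2 n (j + 1) + stirling2 n j := by
        simp only [stirling2]
      rcases le_or_gt (j + 1) n with h | h
      · have e1 : n - j = (n - (j + 1)) + 1 := by omega
        have e2 : n + 1 - (j + 1) = (n - (j + 1)) + 1 := by omega
        rw [e1, e2, hs]
        ring
      · have e2 : n + 1 - (j + 1) = n - j := by omega
        rw [stirling2_eq_zero (show n < j + 1 by omega), hs,
          stirling2_eq_zero (show n < j + 1 by omega), e2]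
        ring

theorem typeB_total_count (n : ℕ) :
    Nat.card {P : Finset (Finset ℤ) // IsBPartNZ n P}
      = ∑ j ∈ Finset.range (n + 1), 2 ^ (n - j) * stirling2 n j :=
  calc Nat.card {P : Finset (Finset ℤ) // IsBPartNZ n P}
      = Nat.card {g : ℕ → ℤ // Gcond n g} := Nat.card_congr (equivG n)
    _ = ∑ j ∈ Finset.range (n + 1), Nat.card (Tset n j) := card_G_eq_sum n
    _ = ∑ j ∈ Finset.range (n + 1), 2 ^ (n - j) * stirling2 n j :=
        Finset.sum_congr rfl fun j _ => card_T_formula n j
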